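/- arXiv:1901.07970 — 2 statements merged into one kernel-verified Lean document; each statement's English description precedes it below -/
import Mathlib

section
/- Let p ≥ 1, let S, Q ∈ ℝ^{p×p} be symmetric, let λ > 0, let Ψ* ∈ ℝ^{p×p} with support U, and let Ψ̂ be any global minimizer of the penalized loss f. If 2‖SΨ*S − Q‖_∞ ≤ λ/2, then Ψ̂ belongs to the cone C(Ψ*), i.e. ‖Ψ̂_{U^c}‖₁ ≤ 3‖Ψ̂_U − Ψ*_U‖₁. (Lemma 1) -/
open Matrix

/-- Entrywise ℓ1 norm of a matrix: `‖A‖₁ = ∑_{i,j} |A_{ij}|`. -/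
noncomputable def entryL1 {p : ℕ} (A : Matrix (Fin p) (Fin p) ℝ) : ℝ :=
  ∑ i, ∑ j, |A i j|

/-- Entrywise max norm of a matrix: `‖A‖_∞ = max_{i,j} |A_{ij}|`. -/
noncomputable def entryMax {p : ℕ} (A : Matrix (Fin p) (Fin p) ℝ) : ℝ :=
  ⨆ ij : Fin p × Fin p, |A ij.1 ij.2|

/-- `A_U`: the matrix agreeing with `A` on the support `U = {(i,j) : Ψ*_{ij} ≠ 0}` of `Ψstar`,
and zero elsewhere. -/
noncomputable def onSupp {p : ℕ} (Ψstar A : Matrix (Fin p) (Fin p) ℝ) : Matrix (Fin p) (Fin p) ℝ :=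
  fun i j => if Ψstar i j ≠ 0 then A i j else 0

/-- `A_{U^c} = A - A_U`. -/
noncomputable def offSupp {p : ℕ} (Ψstar A : Matrix (Fin p) (Fin p) ℝ) : Matrix (Fin p) (Fin p) ℝ :=
  A - onSupp Ψstar A

/-- The penalized loss `f(Ψ) = tr(ΨᵀSΨS)/2 − tr(ΨQ) + λ‖Ψ‖₁`. -/
noncomputable def penLoss {p : ℕ} (S Q : Matrix (Fin p) (Fin p) ℝ) (lam : ℝ)
    (Ψ : Matrix (Fin p) (Fin p) ℝ) : ℝ :=
  (Ψᵀ * S * Ψ * S).trace / 2 - (Ψ * Q).trace + lam * entryL1 Ψ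

section Aux

variable {p : ℕ}

lemma entryL1_nonneg (A : Matrix (Fin p) (Fin p) ℝ) : 0 ≤ entryL1 A :=
  Finset.sum_nonneg fun _ _ => Finset.sum_nonneg fun _ _ => abs_nonneg _

lemma entryL1_add_le (A B : Matrix (Fin p) (Fin p) ℝ) :
    entryL1 (A + B) ≤ entryL1 A + entryL1 B := by
  unfold entryL1
  rw [← Finset.sum_add_distrib]
  refine Finset.sum_le_sum fun i _ => ?_
  rw [← Finset.sum_add_distrib]
  exact Finset.sum_le_sum fun j _ => abs_add_le _ _

lemma entryL1_smul (t : ℝ) (A : Matrix (Fin p) (Fin p) ℝ) :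
    entryL1 (t • A) = |t| * entryL1 A := by
  unfold entryL1
  simp [abs_mul, Finset.mul_sum]

lemma trace_cross (S Ψ Δ : Matrix (Fin p) (Fin p) ℝ) (hS : S.IsSymm) :
    (Ψᵀ * S * Δ * S).trace = (Δᵀ * S * Ψ * S).trace := by
  have h1 : (Ψᵀ * S * Δ * S)ᵀ = S * Δᵀ * S * Ψ := by
    rw [Matrix.transpose_mul, Matrix.transpose_mul, Matrix.transpose_mul,
      Matrix.transpose_transpose, hS.eq]
    noncomm_ring
  calc (Ψᵀ * S * Δ * S).trace = ((Ψᵀ * S * Δ * S)ᵀ).trace := (Matrix.trace_transpose _).symm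
    _ = (S * (Δᵀ * S * Ψ)).trace := by rw [h1]; noncomm_ring
    _ = ((Δᵀ * S * Ψ) * S).trace := Matrix.trace_mul_comm _ _
    _ = (Δᵀ * S * Ψ * S).trace := rfl

lemma g_expand (S Q Ψ Δ : Matrix (Fin p) (Fin p) ℝ) (hS : S.IsSymm) (t : ℝ) :
    ((Ψ + t • Δ)ᵀ * S * (Ψ + t • Δ) * S).trace / 2 - ((Ψ + t • Δ) * Q).trace
      = (Ψᵀ * S * Ψ * S).trace / 2 - (Ψ * Q).trace
        + t * ((Δᵀ * S * Ψ * S).trace - (Δ * Q).trace)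
        + t ^ 2 * (Δᵀ * S * Δ * S).trace / 2 := by
  have hc := trace_cross S Ψ Δ hS
  simp only [Matrix.transpose_add, Matrix.transpose_smul, Matrix.add_mul, Matrix.mul_add,
    Matrix.smul_mul, Matrix.mul_smul, Matrix.trace_add, Matrix.trace_smul, smul_eq_mul,
    smul_smul] at *
  linear_combination (t / 2) * hc

lemma trace_sum1 (Δ M : Matrix (Fin p) (Fin p) ℝ) :
    (Δᵀ * M).trace = ∑ i, ∑ j, Δ i j * M i j := by
  simp only [Matrix.trace, Matrix.diag, Matrix.mul_apply, Matrix.transpose_apply]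
  exact Finset.sum_comm

lemma trace_sum2 (Δ Q : Matrix (Fin p) (Fin p) ℝ) :
    (Δ * Q).trace = ∑ i, ∑ j, Δ i j * Q j i := by
  simp only [Matrix.trace, Matrix.diag, Matrix.mul_apply]

lemma abs_le_entryMax (M : Matrix (Fin p) (Fin p) ℝ) (i j : Fin p) :
    |M i j| ≤ entryMax M :=
  le_ciSup (f := fun ij : Fin p × Fin p => |M ij.1 ij.2|)
    (Set.Finite.bddAbove (Set.finite_range _)) (i, j)

lemma linpart_le (Δ M : Matrix (Fin p) (Fin p) ℝ) :
    |∑ i, ∑ j, Δ i j * M i j| ≤ entryMax M * entryL1 Δ := by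
  calc |∑ i, ∑ j, Δ i j * M i j| ≤ ∑ i, ∑ j, |Δ i j * M i j| := by
        refine (Finset.abs_sum_le_sum_abs _ _).trans ?_
        exact Finset.sum_le_sum fun i _ => Finset.abs_sum_le_sum_abs _ _
    _ ≤ ∑ i, ∑ j, |Δ i j| * entryMax M := by
        refine Finset.sum_le_sum fun i _ => Finset.sum_le_sum fun j _ => ?_
        rw [abs_mul]
        exact mul_le_mul_of_nonneg_left (abs_le_entryMax M i j) (abs_nonneg _)
    _ = entryMax M * entryL1 Δ := by
        unfold entryL1; rw [Finset.mul_sum]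
        refine Finset.sum_congr rfl fun i _ => ?_
        rw [Finset.mul_sum]
        exact Finset.sum_congr rfl fun j _ => mul_comm _ _

end Aux

set_option maxHeartbeats 1000000 in
/-- **Lemma 1.** If `2‖SΨ*S − Q‖_∞ ≤ λ/2`, then any global minimizer `Ψ̂` of the
penalized loss lies in the cone `C(Ψ*)`, i.e. `‖Ψ̂_{U^c}‖₁ ≤ 3‖Ψ̂_U − Ψ*_U‖₁`. -/
theorem lemma1 {p : ℕ} (hp : 1 ≤ p) (S Q : Matrix (Fin p) (Fin p) ℝ)
    (hS : S.IsSymm) (hQ : Q.IsSymm) (lam : ℝ) (hlam : 0 < lam)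
    (Ψstar Ψhat : Matrix (Fin p) (Fin p) ℝ)
    (hmin : ∀ Ψ : Matrix (Fin p) (Fin p) ℝ, penLoss S Q lam Ψhat ≤ penLoss S Q lam Ψ)
    (htune : 2 * entryMax (S * Ψstar * S - Q) ≤ lam / 2) :
    entryL1 (offSupp Ψstar Ψhat) ≤
      3 * entryL1 (onSupp Ψstar Ψhat - onSupp Ψstar Ψstar) := by
  have hΔdef : Ψhat = Ψstar + (1 : ℝ) • (Ψhat - Ψstar) := by simp
  set Δ : Matrix (Fin p) (Fin p) ℝ := Ψhat - Ψstar with hΔ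
  set M : Matrix (Fin p) (Fin p) ℝ := S * Ψstar * S - Q with hM
  set L : ℝ := (Δᵀ * S * Ψstar * S).trace - (Δ * Q).trace with hL
  set c : ℝ := (Δᵀ * S * Δ * S).trace with hc
  set a : ℝ := entryL1 (onSupp Ψstar Ψhat - onSupp Ψstar Ψstar) with ha'
  set b : ℝ := entryL1 (offSupp Ψstar Ψhat) with hb'
  have ha : 0 ≤ a := entryL1_nonneg _
  have hb : 0 ≤ b := entryL1_nonneg _
  -- entrywise formula for L
  have hLsum : L = ∑ i, ∑ j, Δ i j * M i j := by
    rw [hL, trace_sum2 Δ Q,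
      show Δᵀ * S * Ψstar * S = Δᵀ * (S * Ψstar * S) by noncomm_ring,
      trace_sum1 Δ (S * Ψstar * S), ← Finset.sum_sub_distrib]
    refine Finset.sum_congr rfl fun i _ => ?_
    rw [← Finset.sum_sub_distrib]
    refine Finset.sum_congr rfl fun j _ => ?_
    have hq : Q j i = Q i j := hQ.apply i j
    rw [hM]
    simp only [Matrix.sub_apply, hq]
    ring
  have hMmax : entryMax M ≤ lam / 4 := by rw [hM]; linarith
  have hLbound : |L| ≤ lam / 4 * entryL1 Δ := by
    rw [hLsum]
    exact (linpart_le Δ M).trans (mul_le_mul_of_nonneg_right hMmax (entryL1_nonneg Δ))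
  -- c ≥ 0 since Ψhat is a global minimizer
  have hcnn : 0 ≤ c := by
    by_contra hneg
    push_neg at hneg
    set g0 : ℝ := (Ψstarᵀ * S * Ψstar * S).trace / 2 - (Ψstar * Q).trace with hg0
    set A0 : ℝ := g0 + lam * entryL1 Ψstar - penLoss S Q lam Ψhat with hA0
    set B : ℝ := |L| + lam * entryL1 Δ with hB
    have hBnn : 0 ≤ B :=
      add_nonneg (abs_nonneg _) (mul_nonneg hlam.le (entryL1_nonneg Δ))
    set ε : ℝ := -c / 2 with hε
    have hεpos : 0 < ε := by rw [hε]; linarith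
    set t : ℝ := max 1 ((B + |A0| + 1) / ε) with ht
    have ht1 : (1 : ℝ) ≤ t := le_max_left _ _
    have htpos : (0 : ℝ) < t := lt_of_lt_of_le one_pos ht1
    have htε : B + |A0| + 1 ≤ ε * t := by
      calc B + |A0| + 1 ≤ ((B + |A0| + 1) / ε) * ε := by
            rw [div_mul_cancel₀]; exact hεpos.ne'
        _ ≤ t * ε := by
            apply mul_le_mul_of_nonneg_right (le_max_right _ _) hεpos.le
        _ = ε * t := mul_comm _ _
    have key := hmin (Ψstar + t • Δ)
    rw [show penLoss S Q lam (Ψstar + t • Δ)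
        = ((Ψstar + t • Δ)ᵀ * S * (Ψstar + t • Δ) * S).trace / 2
          - ((Ψstar + t • Δ) * Q).trace + lam * entryL1 (Ψstar + t • Δ) from rfl,
      g_expand S Q Ψstar Δ hS t, ← hL, ← hc] at key
    have hl1 : entryL1 (Ψstar + t • Δ) ≤ entryL1 Ψstar + t * entryL1 Δ := by
      refine (entryL1_add_le _ _).trans ?_
      rw [entryL1_smul, abs_of_pos htpos]
    have key2 : 0 ≤ A0 + t * L + t ^ 2 * c / 2 + lam * (t * entryL1 Δ) := by
      have h2 : lam * entryL1 (Ψstar + t • Δ)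
          ≤ lam * (entryL1 Ψstar + t * entryL1 Δ) :=
        mul_le_mul_of_nonneg_left hl1 hlam.le
      rw [hA0, hg0]
      nlinarith [key, h2]
    have hLle : t * L ≤ t * |L| := mul_le_mul_of_nonneg_left (le_abs_self L) htpos.le
    have hA0le : A0 ≤ |A0| := le_abs_self A0
    have hmul : t * (B + |A0| + 1) ≤ t * (ε * t) :=
      mul_le_mul_of_nonneg_left htε htpos.le
    have hone : |A0| + 1 ≤ t * (|A0| + 1) :=
      le_mul_of_one_le_left (by positivity) ht1
    rw [hε] at hmul
    rw [hB] at hmul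
    nlinarith [key2, hLle, hA0le, hmul, hone]
  -- basic inequality from minimality at Ψstar
  have hbasic : L + c / 2 + lam * entryL1 Ψhat ≤ lam * entryL1 Ψstar := by
    have h := hmin Ψstar
    nth_rewrite 1 [penLoss] at h
    rw [show Ψhatᵀ * S * Ψhat * S = (Ψstar + (1:ℝ) • Δ)ᵀ * S * (Ψstar + (1:ℝ) • Δ) * S by
        rw [← hΔdef],
      show (Ψhat * Q).trace = ((Ψstar + (1:ℝ) • Δ) * Q).trace by rw [← hΔdef]] at h
    rw [show ((Ψstar + (1:ℝ) • Δ)ᵀ * S * (Ψstar + (1:ℝ) • Δ) * S).trace / 2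
          - ((Ψstar + (1:ℝ) • Δ) * Q).trace
        = (Ψstarᵀ * S * Ψstar * S).trace / 2 - (Ψstar * Q).trace
          + (1:ℝ) * ((Δᵀ * S * Ψstar * S).trace - (Δ * Q).trace)
          + (1:ℝ) ^ 2 * (Δᵀ * S * Δ * S).trace / 2 from g_expand S Q Ψstar Δ hS 1,
      ← hL, ← hc, penLoss] at h
    linarith
  -- support decompositions (entrywise)
  have e1 : entryL1 Δ = a + b := by
    rw [hΔ, ha', hb']
    unfold entryL1
    rw [← Finset.sum_add_distrib]
    refine Finset.sum_congr rfl fun i _ => ?_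
    rw [← Finset.sum_add_distrib]
    refine Finset.sum_congr rfl fun j _ => ?_
    by_cases h : Ψstar i j = 0
    · simp [onSupp, offSupp, Matrix.sub_apply, h]
    · simp [onSupp, offSupp, Matrix.sub_apply, h]
  have e2 : entryL1 Ψhat = entryL1 (onSupp Ψstar Ψhat) + b := by
    rw [hb']
    unfold entryL1
    rw [← Finset.sum_add_distrib]
    refine Finset.sum_congr rfl fun i _ => ?_
    rw [← Finset.sum_add_distrib]
    refine Finset.sum_congr rfl fun j _ => ?_
    by_cases h : Ψstar i j = 0
    · simp [onSupp, offSupp, Matrix.sub_apply, h]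
    · simp [onSupp, offSupp, Matrix.sub_apply, h]
  have e3 : entryL1 Ψstar ≤ entryL1 (onSupp Ψstar Ψhat) + a := by
    rw [ha']
    unfold entryL1
    rw [← Finset.sum_add_distrib]
    refine Finset.sum_le_sum fun i _ => ?_
    rw [← Finset.sum_add_distrib]
    refine Finset.sum_le_sum fun j _ => ?_
    by_cases h : Ψstar i j = 0
    · simp [onSupp, offSupp, Matrix.sub_apply, h]
    · simp only [onSupp, offSupp, Matrix.sub_apply, h, ne_eq, not_false_iff, if_true,
        ite_not]
      calc |Ψstar i j| ≤ |Ψhat i j| + |Ψstar i j - Ψhat i j| := by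
            have := abs_sub_abs_le_abs_sub (Ψstar i j) (Ψhat i j)
            linarith [abs_nonneg (Ψstar i j - Ψhat i j), this]
        _ = |Ψhat i j| + |Ψhat i j - Ψstar i j| := by rw [abs_sub_comm]
  -- finish
  rw [e2] at hbasic
  have he3 : lam * entryL1 Ψstar ≤ lam * (entryL1 (onSupp Ψstar Ψhat) + a) :=
    mul_le_mul_of_nonneg_left e3 hlam.le
  have hLb : -L ≤ lam / 4 * (a + b) := by
    rw [← e1]
    calc -L ≤ |L| := neg_le_abs L
      _ ≤ lam / 4 * entryL1 Δ := hLbound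
  nlinarith [hbasic, he3, hLb, hcnn, ha, hb, hlam]
end

section
/- Suppose X ∈ ℝ^p is a mean-zero random vector with positive definite covariance Σ_X and finite fourth moments satisfying Condition 1, and Y follows model (2) with ε mean-zero and independent of X. Then for every pair i ≤ j, the (i,j) entry ψ_{ij} of the principal Hessian matrix Ψ = Σ_X⁻¹ Σ_{YXX} Σ_X⁻¹ satisfies: ψ_{ij} = ψ_{ji}, and ψ_{ij} ≠ 0 if and only if β_{ij} ≠ 0. (Proposition 2) -/
/-!
Writing `Z = Σ_X⁻¹ X` and using the symmetry of `Σ_X⁻¹`, the entry `ψ_ab` is the covariance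
`E[(Y - E Y) Z_a Z_b]`, which is visibly symmetric in `a, b`. Expanding `Y` by the model, the
linear part drops out because `Z_a Z_b` is a quadratic form in `X` and all third moments vanish
(C1), and `ε` drops out by independence. What remains is
`ψ_ab = Σ_{m ≤ n} β_mn Cov(X_m X_n, Z_a Z_b)`, and by (C2) only the term `(m, n) = (a, b)`
survives, with a nonzero covariance factor.
-/

open MeasureTheory ProbabilityTheory Matrix Finset

lemma sum_sum_Ici_eq_single {ι M : Type*} [Fintype ι] [PartialOrder ι] [LocallyFiniteOrderTop ι]
    [AddCommMonoid M] {f : ι → ι → M} {i j : ι} (hij : i ≤ j)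
    (hf : ∀ m n, m ≤ n → f m n ≠ 0 → m = i ∧ n = j) :
    ∑ m, ∑ n ∈ Ici m, f m n = f i j := by
  rw [sum_eq_single i, sum_eq_single_of_mem j (mem_Ici.2 hij)]
  · exact fun n hn hnj => by_contra fun h => hnj (hf i n (mem_Ici.1 hn) h).2
  · exact fun m _ hmi => sum_eq_zero fun n hn => by_contra fun h => hmi (hf m n (mem_Ici.1 hn) h).1
  · exact fun h => absurd (mem_univ i) h

section

variable {Ω : Type*} [MeasurableSpace Ω] {μ : Measure Ω} {n : Type*} [Fintype n]

lemma mul_mulVec_mul_mulVec (A : Matrix n n ℝ) (x : n → ℝ) (c : ℝ) (a b : n) :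
    c * ((A *ᵥ x) a * (A *ᵥ x) b) = ∑ k, ∑ l, A a k * A b l * (c * (x k * x l)) := by
  simp only [mulVec, dotProduct]
  rw [sum_mul_sum]
  simp only [mul_sum]
  exact sum_congr rfl fun k _ => sum_congr rfl fun l _ => by ring

lemma integrable_mul_mulVec_mul_mulVec (A : Matrix n n ℝ) {X : Ω → n → ℝ} {g : Ω → ℝ}
    (h : ∀ k l, Integrable (fun ω => g ω * (X ω k * X ω l)) μ) (a b : n) :
    Integrable (fun ω => g ω * ((A *ᵥ X ω) a * (A *ᵥ X ω) b)) μ := by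
  simp_rw [mul_mulVec_mul_mulVec]
  exact integrable_finsetSum _ fun k _ => integrable_finsetSum _ fun l _ => (h k l).const_mul _

lemma integral_mul_mulVec_mul_mulVec (A : Matrix n n ℝ) {X : Ω → n → ℝ} {g : Ω → ℝ}
    (h : ∀ k l, Integrable (fun ω => g ω * (X ω k * X ω l)) μ) (a b : n) :
    ∫ ω, g ω * ((A *ᵥ X ω) a * (A *ᵥ X ω) b) ∂μ
      = (A * of (fun k l => ∫ ω, g ω * (X ω k * X ω l) ∂μ) * Aᵀ) a b := by
  simp_rw [mul_mulVec_mul_mulVec]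
  rw [integral_finsetSum _ fun k _ => integrable_finsetSum _ fun l _ => (h k l).const_mul _]
  simp_rw [integral_finsetSum _ fun l _ => (h _ l).const_mul _, integral_const_mul]
  simp only [mul_apply, of_apply, transpose_apply, sum_mul]
  rw [sum_comm]
  exact sum_congr rfl fun k _ => sum_congr rfl fun l _ => by ring

lemma integral_mul_mulVec_mul_mulVec_eq_zero (A : Matrix n n ℝ) {X : Ω → n → ℝ} {g : Ω → ℝ}
    (h : ∀ k l, Integrable (fun ω => g ω * (X ω k * X ω l)) μ)
    (h0 : ∀ k l, ∫ ω, g ω * (X ω k * X ω l) ∂μ = 0) (a b : n) :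
    ∫ ω, g ω * ((A *ᵥ X ω) a * (A *ᵥ X ω) b) ∂μ = 0 := by
  have hzero : of (fun k l => ∫ ω, g ω * (X ω k * X ω l) ∂μ) = 0 := by
    ext k l
    exact h0 k l
  rw [integral_mul_mulVec_mul_mulVec A h, hzero, mul_zero, zero_mul, Matrix.zero_apply]

lemma integral_mul_of_quadratic_model {ι : Type*} [Fintype ι] [Preorder ι]
    [LocallyFiniteOrderTop ι] {X : Ω → ι → ℝ} {θ : ι → ℝ} {β : ι → ι → ℝ} {ε Y W : Ω → ℝ}
    (hY : ∀ ω, Y ω = ∑ i, θ i * X ω i + ∑ i, ∑ j ∈ Ici i, β i j * X ω i * X ω j + ε ω)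
    (hXW : ∀ i, Integrable (fun ω => X ω i * W ω) μ) (hXW0 : ∀ i, ∫ ω, X ω i * W ω ∂μ = 0)
    (hXXW : ∀ i j, Integrable (fun ω => X ω i * X ω j * W ω) μ)
    (hεW : Integrable (fun ω => ε ω * W ω) μ) (hεW0 : ∫ ω, ε ω * W ω ∂μ = 0) :
    ∫ ω, Y ω * W ω ∂μ = ∑ i, ∑ j ∈ Ici i, β i j * ∫ ω, X ω i * X ω j * W ω ∂μ := by
  have hlin : ∀ i, Integrable (fun ω => θ i * (X ω i * W ω)) μ := fun i => (hXW i).const_mul _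
  have hquad : ∀ i j, Integrable (fun ω => β i j * (X ω i * X ω j * W ω)) μ :=
    fun i j => (hXXW i j).const_mul _
  have hexpand : ∀ ω, Y ω * W ω = ∑ i, θ i * (X ω i * W ω)
      + ∑ i, ∑ j ∈ Ici i, β i j * (X ω i * X ω j * W ω) + ε ω * W ω := by
    intro ω
    simp only [hY, add_mul, sum_mul, mul_assoc]
  have hθ : Integrable (fun ω => ∑ i, θ i * (X ω i * W ω)) μ :=
    integrable_finsetSum _ fun i _ => hlin i
  have hβ : Integrable (fun ω => ∑ i, ∑ j ∈ Ici i, β i j * (X ω i * X ω j * W ω)) μ :=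
    integrable_finsetSum _ fun i _ => integrable_finsetSum _ fun j _ => hquad i j
  have hθβ : Integrable (fun ω => ∑ i, θ i * (X ω i * W ω)
      + ∑ i, ∑ j ∈ Ici i, β i j * (X ω i * X ω j * W ω)) μ := hθ.add hβ
  simp_rw [hexpand]
  rw [integral_add hθβ hεW, integral_add hθ hβ, hεW0, add_zero,
    integral_finsetSum _ fun i _ => hlin i, integral_finsetSum _ fun i _ =>
      integrable_finsetSum _ fun j _ => hquad i j]
  simp_rw [integral_finsetSum _ fun j _ => hquad _ j, integral_const_mul, hXW0, mul_zero,
    sum_const_zero, zero_add]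

lemma integral_sub_integral_mul_of_quadratic_model {ι : Type*} [Fintype ι] [Preorder ι]
    [LocallyFiniteOrderTop ι] {X : Ω → ι → ℝ} {θ : ι → ℝ} {β : ι → ι → ℝ} {ε Y W : Ω → ℝ}
    (hY : ∀ ω, Y ω = ∑ i, θ i * X ω i + ∑ i, ∑ j ∈ Ici i, β i j * X ω i * X ω j + ε ω)
    (hX : ∀ i, Integrable (fun ω => X ω i) μ) (hX0 : ∀ i, ∫ ω, X ω i ∂μ = 0)
    (hXX : ∀ i j, Integrable (fun ω => X ω i * X ω j) μ)
    (hε : Integrable ε μ) (hε0 : ∫ ω, ε ω ∂μ = 0)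
    (hW : Integrable W μ) (hYW : Integrable (fun ω => Y ω * W ω) μ)
    (hXW : ∀ i, Integrable (fun ω => X ω i * W ω) μ) (hXW0 : ∀ i, ∫ ω, X ω i * W ω ∂μ = 0)
    (hXXW : ∀ i j, Integrable (fun ω => X ω i * X ω j * W ω) μ)
    (hεW : Integrable (fun ω => ε ω * W ω) μ) (hεW0 : ∫ ω, ε ω * W ω ∂μ = 0) :
    ∫ ω, (Y ω - ∫ ω', Y ω' ∂μ) * W ω ∂μ = ∑ i, ∑ j ∈ Ici i, β i j *
      (∫ ω, X ω i * X ω j * W ω ∂μ - (∫ ω, X ω i * X ω j ∂μ) * ∫ ω, W ω ∂μ) := by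
  have hEY : ∫ ω, Y ω ∂μ = ∑ i, ∑ j ∈ Ici i, β i j * ∫ ω, X ω i * X ω j ∂μ := by
    simpa using integral_mul_of_quadratic_model (W := fun _ => 1) hY (by simpa using hX)
      (by simpa using hX0) (by simpa using hXX) (by simpa using hε) (by simpa using hε0)
  simp_rw [sub_mul]
  rw [integral_sub hYW (hW.const_mul _), integral_const_mul,
    integral_mul_of_quadratic_model hY hXW hXW0 hXXW hεW hεW0, hEY, sum_mul, ← sum_sub_distrib]
  simp_rw [sum_mul, ← sum_sub_distrib, mul_sub, mul_assoc]

end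

theorem proposition2_general {Ω : Type*} [MeasurableSpace Ω] (μ : Measure Ω) {p : ℕ}
    (X : Ω → Fin p → ℝ) (Sig : Matrix (Fin p) (Fin p) ℝ) (hSig : Sig.PosDef)
    -- mean zero, covariance `Sig`, finite fourth moments
    (hmean : ∀ i, ∫ ω, X ω i ∂μ = 0)
    (hmom4 : ∀ i j k l : Fin p, Integrable (fun ω => X ω i * X ω j * X ω k * X ω l) μ)
    (hmom2 : ∀ i j : Fin p, Integrable (fun ω => X ω i * X ω j) μ)
    (hXint : ∀ i, Integrable (fun ω => X ω i) μ)
    -- Condition 1 (C1): third moments vanish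
    (hC1 : ∀ i j k : Fin p, ∫ ω, X ω i * X ω j * X ω k ∂μ = 0)
    (hmom3 : ∀ i j k : Fin p, Integrable (fun ω => X ω i * X ω j * X ω k) μ)
    -- Condition 1 (C2), with `Z = Σ_X⁻¹ X`
    (Z : Ω → Fin p → ℝ) (hZ : ∀ ω, Z ω = Sig⁻¹.mulVec (X ω))
    (hC2 : ∀ k l i j : Fin p,
      ((∫ ω, (X ω k * X ω l) * (Z ω i * Z ω j) ∂μ)
          - (∫ ω, X ω k * X ω l ∂μ) * (∫ ω, Z ω i * Z ω j ∂μ) ≠ 0) ↔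
        (k = i ∧ l = j) ∨ (k = j ∧ l = i))
    -- model (2)
    (θ : Fin p → ℝ) (β : Fin p → Fin p → ℝ)
    (ε : Ω → ℝ) (hindep : IndepFun ε X μ)
    (hεint : Integrable ε μ) (hεmean : ∫ ω, ε ω ∂μ = 0)
    (Y : Ω → ℝ)
    (hY : ∀ ω, Y ω = ∑ i, θ i * X ω i
        + ∑ i, ∑ j ∈ Finset.Ici i, β i j * X ω i * X ω j + ε ω)
    (hYXX : ∀ k l : Fin p, Integrable (fun ω => Y ω * X ω k * X ω l) μ)
    (Syxx Ψ : Matrix (Fin p) (Fin p) ℝ)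
    (hSyxx : ∀ k l, Syxx k l = ∫ ω, (Y ω - ∫ ω', Y ω' ∂μ) * (X ω k * X ω l) ∂μ)
    (hΨ : Ψ = Sig⁻¹ * Syxx * Sig⁻¹) :
    ∀ i j : Fin p, i ≤ j → Ψ i j = Ψ j i ∧ (Ψ i j ≠ 0 ↔ β i j ≠ 0) := by
  obtain rfl : Z = fun ω => Sig⁻¹ *ᵥ X ω := funext hZ
  beta_reduce at hC2
  have hXXX : ∀ m k l, Integrable (fun ω => X ω m * (X ω k * X ω l)) μ := fun m k l => by
    simpa only [mul_assoc] using hmom3 m k l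
  have hXXX0 : ∀ m k l, ∫ ω, X ω m * (X ω k * X ω l) ∂μ = 0 := fun m k l => by
    simpa only [mul_assoc] using hC1 m k l
  have hXXXX : ∀ m n k l, Integrable (fun ω => X ω m * X ω n * (X ω k * X ω l)) μ :=
    fun m n k l => by simpa only [mul_assoc] using hmom4 m n k l
  have hεXX : ∀ k l, IndepFun ε (fun ω => X ω k * X ω l) μ := fun k l =>
    hindep.comp measurable_id (by fun_prop : Measurable fun v : Fin p → ℝ => v k * v l)
  have hεXXint : ∀ k l, Integrable (fun ω => ε ω * (X ω k * X ω l)) μ := fun k l =>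
    (hεXX k l).integrable_mul hεint (hmom2 k l)
  have hεXX0 : ∀ k l, ∫ ω, ε ω * (X ω k * X ω l) ∂μ = 0 := fun k l => by
    rw [(hεXX k l).integral_fun_mul_eq_mul_integral hεint.1 (hmom2 k l).1, hεmean, zero_mul]
  have hYXX' : ∀ k l, Integrable (fun ω => (Y ω - ∫ ω', Y ω' ∂μ) * (X ω k * X ω l)) μ :=
    fun k l => ((hYXX k l).sub ((hmom2 k l).const_mul _)).congr
      (ae_of_all _ fun ω => by simp only [Pi.sub_apply]; ring)
  have hΨint : ∀ a b, Ψ a b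
      = ∫ ω, (Y ω - ∫ ω', Y ω' ∂μ) * ((Sig⁻¹ *ᵥ X ω) a * (Sig⁻¹ *ᵥ X ω) b) ∂μ := by
    intro a b
    have hS : Syxx = of fun k l => ∫ ω, (Y ω - ∫ ω', Y ω' ∂μ) * (X ω k * X ω l) ∂μ := ext hSyxx
    have hAt : Sig⁻¹ᵀ = Sig⁻¹ := hSig.isHermitian.inv
    rw [integral_mul_mulVec_mul_mulVec _ hYXX', hAt, hΨ, hS]
  intro i j hij
  have hcov := integral_sub_integral_mul_of_quadratic_model hY hXint hmean hmom2 hεint hεmean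
    (by simpa using integrable_mul_mulVec_mul_mulVec Sig⁻¹ (g := 1) (by simpa using hmom2) i j)
    (integrable_mul_mulVec_mul_mulVec Sig⁻¹
      (fun k l => by simpa only [mul_assoc] using hYXX k l) i j)
    (fun m => integrable_mul_mulVec_mul_mulVec Sig⁻¹ (hXXX m) i j)
    (fun m => integral_mul_mulVec_mul_mulVec_eq_zero Sig⁻¹ (hXXX m) (hXXX0 m) i j)
    (fun m n => integrable_mul_mulVec_mul_mulVec Sig⁻¹ (hXXXX m n) i j)
    (integrable_mul_mulVec_mul_mulVec Sig⁻¹ hεXXint i j)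
    (integral_mul_mulVec_mul_mulVec_eq_zero Sig⁻¹ hεXXint hεXX0 i j)
  rw [← hΨint, sum_sum_Ici_eq_single hij fun m n hmn hne => ?_] at hcov
  · refine ⟨by simp only [hΨint, mul_comm ((Sig⁻¹ *ᵥ X _) i)], ?_⟩
    rw [hcov]
    exact ⟨left_ne_zero_of_mul, fun hb => mul_ne_zero hb ((hC2 i j i j).2 (Or.inl ⟨rfl, rfl⟩))⟩
  · rcases (hC2 m n i j).1 (right_ne_zero_of_mul hne) with h | ⟨rfl, rfl⟩
    · exact h
    · exact ⟨le_antisymm hmn hij, le_antisymm hij hmn⟩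

/-- **Proposition 2.** Suppose `X` is a mean-zero random vector with positive definite
covariance `Σ_X` and finite fourth moments satisfying Condition 1 (C1: all third moments
`E[X_iX_jX_k]` vanish; C2: with `Z = Σ_X⁻¹X`, `Cov(X_kX_ℓ, Z_iZ_j) ≠ 0` iff
`(k = i ∧ ℓ = j) ∨ (k = j ∧ ℓ = i)`), and `Y` follows model (2) with `ε` mean-zero and
independent of `X`. Then for every `i ≤ j`, the entries of
`Ψ = Σ_X⁻¹ Σ_{YXX} Σ_X⁻¹` satisfy `ψ_{ij} = ψ_{ji}` and `ψ_{ij} ≠ 0 ↔ β_{ij} ≠ 0`. -/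
theorem proposition2 {Ω : Type*} [MeasurableSpace Ω] (μ : Measure Ω)
    [IsProbabilityMeasure μ] {p : ℕ}
    (X : Ω → Fin p → ℝ) (hXm : Measurable X)
    (Sig : Matrix (Fin p) (Fin p) ℝ) (hSig : Sig.PosDef)
    -- mean zero, covariance `Sig`, finite fourth moments
    (hmean : ∀ i, ∫ ω, X ω i ∂μ = 0)
    (hcov : ∀ i j, ∫ ω, X ω i * X ω j ∂μ = Sig i j)
    (hmom4 : ∀ i j k l : Fin p, Integrable (fun ω => X ω i * X ω j * X ω k * X ω l) μ)
    (hmom2 : ∀ i j : Fin p, Integrable (fun ω => X ω i * X ω j) μ)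
    (hXint : ∀ i, Integrable (fun ω => X ω i) μ)
    -- Condition 1 (C1): third moments vanish
    (hC1 : ∀ i j k : Fin p, ∫ ω, X ω i * X ω j * X ω k ∂μ = 0)
    (hmom3 : ∀ i j k : Fin p, Integrable (fun ω => X ω i * X ω j * X ω k) μ)
    -- Condition 1 (C2), with `Z = Σ_X⁻¹ X`
    (Z : Ω → Fin p → ℝ) (hZ : ∀ ω, Z ω = Sig⁻¹.mulVec (X ω))
    (hC2 : ∀ k l i j : Fin p,
      ((∫ ω, (X ω k * X ω l) * (Z ω i * Z ω j) ∂μ)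
          - (∫ ω, X ω k * X ω l ∂μ) * (∫ ω, Z ω i * Z ω j ∂μ) ≠ 0) ↔
        (k = i ∧ l = j) ∨ (k = j ∧ l = i))
    -- model (2)
    (θ : Fin p → ℝ) (β : Fin p → Fin p → ℝ)
    (ε : Ω → ℝ) (hεm : Measurable ε) (hindep : IndepFun ε X μ)
    (hεint : Integrable ε μ) (hεmean : ∫ ω, ε ω ∂μ = 0)
    (Y : Ω → ℝ)
    (hY : ∀ ω, Y ω = ∑ i, θ i * X ω i
        + ∑ i, ∑ j ∈ Finset.Ici i, β i j * X ω i * X ω j + ε ω)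
    (hYint : Integrable Y μ)
    (hYXX : ∀ k l : Fin p, Integrable (fun ω => Y ω * X ω k * X ω l) μ)
    (Syxx Ψ : Matrix (Fin p) (Fin p) ℝ)
    (hSyxx : ∀ k l, Syxx k l = ∫ ω, (Y ω - ∫ ω', Y ω' ∂μ) * (X ω k * X ω l) ∂μ)
    (hΨ : Ψ = Sig⁻¹ * Syxx * Sig⁻¹) :
    ∀ i j : Fin p, i ≤ j → Ψ i j = Ψ j i ∧ (Ψ i j ≠ 0 ↔ β i j ≠ 0) :=
  proposition2_general μ X Sig hSig hmean hmom4 hmom2 hXint hC1 hmom3 Z hZ hC2 θ β ε hindep hεint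
    hεmean Y hY hYXX Syxx Ψ hSyxx hΨ
end
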